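/- arXiv:1703.04560 — 3 statements merged into one kernel-verified Lean document; each statement's English description precedes it below -/
import Mathlib

section
/- (Lemma 5.2, inverse Lipschitz continuity of the space-time linear multistep residual.) Suppose there exists s_A > 0 with ‖A_LM x‖₂ ≥ s_A · ‖x‖₂ for all x ∈ ℝ^{N·N_t}, and suppose the time step satisfies Δt · L_f · σ_max(B_LM) < s_A. Then for any two space-time functions w, y, one has ‖r̄(w) − r̄(y)‖₂ ≥ K_r · ‖vec(w) − vec(y)‖₂, where K_r := s_A − Δt · L_f · σ_max(B_LM) > 0. -/
noncomputable section

/-- A space-time function. -/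
abbrev SpaceTime (N Nt : ℕ) := Fin Nt → EuclideanSpace ℝ (Fin N)

/-- Vectorization of a space-time function: stacks the blocks `w 0, …, w (Nt-1)`
into a single Euclidean vector of dimension `N * Nt`. -/
def vec {N Nt : ℕ} (w : SpaceTime N Nt) : EuclideanSpace ℝ (Fin Nt × Fin N) :=
  (WithLp.equiv 2 _).symm (fun p => w p.1 p.2)

/-- The largest singular value (ℓ² operator norm) of a real matrix. -/
def sigmaMax {m n : Type*} [Fintype m] [Fintype n] [DecidableEq n] (M : Matrix m n ℝ) : ℝ :=
  ‖LinearMap.toContinuousLinearMap (Matrix.toEuclideanLin M)‖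

/-- Matrix–vector multiplication as a map between Euclidean spaces. -/
def mulVecE {m n : Type*} [Fintype m] [Fintype n] [DecidableEq n] (M : Matrix m n ℝ)
    (v : EuclideanSpace ℝ n) : EuclideanSpace ℝ m :=
  Matrix.toEuclideanLin M v

/-- The stacked velocity `F̄(w)`: vectorization of `n ↦ f (w n, t n)`. -/
def Fbar {N Nt : ℕ} (f : EuclideanSpace ℝ (Fin N) × ℝ → EuclideanSpace ℝ (Fin N))
    (t : Fin Nt → ℝ) (w : SpaceTime N Nt) : EuclideanSpace ℝ (Fin Nt × Fin N) :=
  vec (fun n => f (w n, t n))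

/-- The space-time linear multistep residual `r̄(w) = A_LM vec(w) − Δt B_LM F̄(w) + b`. -/
def resid {N Nt : ℕ} (A_LM B_LM : Matrix (Fin Nt × Fin N) (Fin Nt × Fin N) ℝ)
    (b : EuclideanSpace ℝ (Fin Nt × Fin N)) (Δt : ℝ)
    (f : EuclideanSpace ℝ (Fin N) × ℝ → EuclideanSpace ℝ (Fin N))
    (t : Fin Nt → ℝ) (w : SpaceTime N Nt) : EuclideanSpace ℝ (Fin Nt × Fin N) :=
  mulVecE A_LM (vec w) - Δt • mulVecE B_LM (Fbar f t w) + b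

/-- Lemma 5.2: inverse Lipschitz continuity of the space-time
linear multistep residual. -/
theorem residual_inverse_lipschitz {N Nt : ℕ} (hN : 1 ≤ N) (hNt : 1 ≤ Nt)
    (t : Fin Nt → ℝ) (Δt : ℝ) (hΔt : 0 < Δt)
    (A_LM B_LM : Matrix (Fin Nt × Fin N) (Fin Nt × Fin N) ℝ)
    (b : EuclideanSpace ℝ (Fin Nt × Fin N))
    (f : EuclideanSpace ℝ (Fin N) × ℝ → EuclideanSpace ℝ (Fin N))
    (L_f : ℝ) (hLf : 0 ≤ L_f)
    (hlip : ∀ (u v : EuclideanSpace ℝ (Fin N)) (n : Fin Nt),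
      ‖f (u, t n) - f (v, t n)‖ ≤ L_f * ‖u - v‖)
    (sA : ℝ) (hsA : 0 < sA)
    (hAlow : ∀ x : EuclideanSpace ℝ (Fin Nt × Fin N), sA * ‖x‖ ≤ ‖mulVecE A_LM x‖)
    (hdt : Δt * L_f * sigmaMax B_LM < sA)
    (w y : SpaceTime N Nt) :
    (sA - Δt * L_f * sigmaMax B_LM) * ‖vec w - vec y‖ ≤
      ‖resid A_LM B_LM b Δt f t w - resid A_LM B_LM b Δt f t y‖ := by

  set d := vec w - vec y with hd
  set σ := sigmaMax B_LM with hσ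
  -- Lipschitz bound on Fbar
  have hsq : ∀ (x : EuclideanSpace ℝ (Fin Nt × Fin N)), ‖x‖^2 = ∑ p, ‖x p‖^2 := by
    intro x; rw [EuclideanSpace.norm_eq, Real.sq_sqrt (by positivity)]
  have hsqN : ∀ (x : EuclideanSpace ℝ (Fin N)), ‖x‖^2 = ∑ i, ‖x i‖^2 := by
    intro x; rw [EuclideanSpace.norm_eq, Real.sq_sqrt (by positivity)]
  have hF : ‖Fbar f t w - Fbar f t y‖ ≤ L_f * ‖d‖ := by
    have key : ‖Fbar f t w - Fbar f t y‖^2 ≤ (L_f * ‖d‖)^2 := by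
      rw [hsq, mul_pow, hsq, Fintype.sum_prod_type, Fintype.sum_prod_type, Finset.mul_sum]
      apply Finset.sum_le_sum
      intro n _
      have h1 : ∑ i, ‖(Fbar f t w - Fbar f t y) (n, i)‖^2
          = ‖f (w n, t n) - f (y n, t n)‖^2 := by rw [hsqN]; rfl
      have h2 : ∑ i, ‖d (n, i)‖^2 = ‖w n - y n‖^2 := by rw [hsqN]; rfl
      rw [h1, h2]
      calc ‖f (w n, t n) - f (y n, t n)‖^2 ≤ (L_f * ‖w n - y n‖)^2 :=
            pow_le_pow_left₀ (norm_nonneg _) (hlip _ _ _) 2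
        _ = L_f^2 * ‖w n - y n‖^2 := by ring
    nlinarith [norm_nonneg (Fbar f t w - Fbar f t y),
      mul_nonneg hLf (norm_nonneg d)]
  -- operator norm bound for B
  have hB : ∀ x : EuclideanSpace ℝ (Fin Nt × Fin N), ‖mulVecE B_LM x‖ ≤ σ * ‖x‖ := by
    intro x
    exact (LinearMap.toContinuousLinearMap (Matrix.toEuclideanLin B_LM)).le_opNorm x
  -- residual difference
  have hres : resid A_LM B_LM b Δt f t w - resid A_LM B_LM b Δt f t y =
      mulVecE A_LM d - Δt • mulVecE B_LM (Fbar f t w - Fbar f t y) := by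
    simp only [resid, hd, mulVecE, map_sub, smul_sub]
    abel
  rw [hres]
  have h1 : sA * ‖d‖ ≤ ‖mulVecE A_LM d‖ := hAlow d
  have h2 : ‖Δt • mulVecE B_LM (Fbar f t w - Fbar f t y)‖ ≤ Δt * (σ * (L_f * ‖d‖)) := by
    rw [norm_smul, Real.norm_eq_abs, abs_of_pos hΔt]
    apply mul_le_mul_of_nonneg_left _ hΔt.le
    calc ‖mulVecE B_LM (Fbar f t w - Fbar f t y)‖ ≤ σ * ‖Fbar f t w - Fbar f t y‖ := hB _
      _ ≤ σ * (L_f * ‖d‖) := by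
          apply mul_le_mul_of_nonneg_left hF
          exact norm_nonneg _
  have h3 := norm_sub_norm_le (mulVecE A_LM d) (Δt • mulVecE B_LM (Fbar f t w - Fbar f t y))
  have h4 := abs_le.mp (le_refl |‖mulVecE A_LM d‖ - ‖Δt • mulVecE B_LM (Fbar f t w - Fbar f t y)‖|)
  have := norm_sub_norm_le (mulVecE A_LM d) (Δt • mulVecE B_LM (Fbar f t w - Fbar f t y))
  have habs : ‖mulVecE A_LM d‖ - ‖Δt • mulVecE B_LM (Fbar f t w - Fbar f t y)‖ ≤
      ‖mulVecE A_LM d - Δt • mulVecE B_LM (Fbar f t w - Fbar f t y)‖ :=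
    (abs_le.mp (abs_norm_sub_norm_le _ _)).2
  nlinarith [hB (Fbar f t w - Fbar f t y)]
end
end

section
/- (Theorem 5.3, a priori error bound with respect to the ℓ²-optimal solution.) Let x be a space-time function with r̄(x) = 0 (the full-order solution), and let x̃ ∈ S be a minimizer of the weighted residual norm over the trial set, i.e. ‖W̄ r̄(x̃)‖₂ ≤ ‖W̄ r̄(w)‖₂ for all w ∈ S. Assume: (i) there exists s_A > 0 with ‖A_LM z‖₂ ≥ s_A ‖z‖₂ for all z ∈ ℝ^{N·N_t}; (ii) Δt · L_f · σ_max(B_LM) < s_A; and (iii) there exists P > 0 with ‖W̄ r̄(w)‖₂ ≥ P · ‖r̄(w)‖₂ for all w ∈ S. Then for every w ∈ S, ‖vec(x) − vec(x̃)‖₂ ≤ (1/P) · ((σ_max(W̄ A_LM) + Δt·L_f·σ_max(W̄ B_LM)) / (s_A − Δt·L_f·σ_max(B_LM))) · ‖vec(x) − vec(w)‖₂. -/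
noncomputable section

lemma norm_mulVecE_le {m n : Type*} [Fintype m] [Fintype n] [DecidableEq n]
    (M : Matrix m n ℝ) (v : EuclideanSpace ℝ n) :
    ‖mulVecE M v‖ ≤ sigmaMax M * ‖v‖ :=
  (LinearMap.toContinuousLinearMap (Matrix.toEuclideanLin M)).le_opNorm v

lemma sigmaMax_nonneg {m n : Type*} [Fintype m] [Fintype n] [DecidableEq n]
    (M : Matrix m n ℝ) : 0 ≤ sigmaMax M := norm_nonneg _

lemma mulVecE_mul {l m n : Type*} [Fintype l] [Fintype m] [Fintype n]
    [DecidableEq m] [DecidableEq n] (A : Matrix l m ℝ) (B : Matrix m n ℝ)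
    (v : EuclideanSpace ℝ n) :
    mulVecE (A * B) v = mulVecE A (mulVecE B v) := by
  simp [mulVecE, Matrix.toEuclideanLin_apply, Matrix.mulVec_mulVec]

lemma mulVecE_sub {m n : Type*} [Fintype m] [Fintype n] [DecidableEq n]
    (M : Matrix m n ℝ) (u v : EuclideanSpace ℝ n) :
    mulVecE M (u - v) = mulVecE M u - mulVecE M v := by
  simp [mulVecE]

lemma vec_sub {N Nt : ℕ} (u v : SpaceTime N Nt) : vec u - vec v = vec (u - v) := rfl

lemma norm_vec_sq {N Nt : ℕ} (w : SpaceTime N Nt) :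
    ‖vec w‖ ^ 2 = ∑ n, ‖w n‖ ^ 2 := by
  rw [← Real.sqrt_sq (norm_nonneg (vec w)), Real.sq_sqrt (by positivity)]
  rw [EuclideanSpace.norm_eq]
  rw [Real.sq_sqrt (by positivity)]
  rw [Fintype.sum_prod_type]
  refine Finset.sum_congr rfl fun n _ => ?_
  rw [EuclideanSpace.norm_eq, Real.sq_sqrt (by positivity)]
  refine Finset.sum_congr rfl fun i _ => ?_
  simp [vec, sq_abs]

lemma Fbar_lip {N Nt : ℕ} (f : EuclideanSpace ℝ (Fin N) × ℝ → EuclideanSpace ℝ (Fin N))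
    (t : Fin Nt → ℝ) (L_f : ℝ) (hLf : 0 ≤ L_f)
    (hlip : ∀ (u v : EuclideanSpace ℝ (Fin N)) (n : Fin Nt),
      ‖f (u, t n) - f (v, t n)‖ ≤ L_f * ‖u - v‖)
    (u v : SpaceTime N Nt) :
    ‖Fbar f t u - Fbar f t v‖ ≤ L_f * ‖vec u - vec v‖ := by
  have h1 : ‖Fbar f t u - Fbar f t v‖ ^ 2 ≤ (L_f * ‖vec u - vec v‖) ^ 2 := by
    rw [Fbar, Fbar, vec_sub, vec_sub, norm_vec_sq, mul_pow, norm_vec_sq, Finset.mul_sum]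
    refine Finset.sum_le_sum fun n _ => ?_
    have := hlip (u n) (v n) n
    have h2 : ‖(fun n => f (u n, t n)) n - (fun n => f (v n, t n)) n‖ ≤
        L_f * ‖u n - v n‖ := this
    calc ‖((fun n => f (u n, t n)) - fun n => f (v n, t n)) n‖ ^ 2
        = ‖(fun n => f (u n, t n)) n - (fun n => f (v n, t n)) n‖ ^ 2 := rfl
      _ ≤ (L_f * ‖u n - v n‖) ^ 2 := by
          apply sq_le_sq' _ h2
          have : 0 ≤ L_f * ‖u n - v n‖ := by positivity
          nlinarith [norm_nonneg ((fun n => f (u n, t n)) n - (fun n => f (v n, t n)) n)]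
      _ = L_f ^ 2 * ‖(u - v) n‖ ^ 2 := by rw [mul_pow]; rfl
  have h0 : 0 ≤ L_f * ‖vec u - vec v‖ := by positivity
  nlinarith [norm_nonneg (Fbar f t u - Fbar f t v)]

/-- Theorem 5.3: a priori error bound with respect to the
ℓ²-optimal solution. -/
theorem apriori_l2_bound {N Nt zb : ℕ} (hN : 1 ≤ N) (hNt : 1 ≤ Nt)
    (t : Fin Nt → ℝ) (Δt : ℝ) (hΔt : 0 < Δt)
    (A_LM B_LM : Matrix (Fin Nt × Fin N) (Fin Nt × Fin N) ℝ)
    (b : EuclideanSpace ℝ (Fin Nt × Fin N))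
    (f : EuclideanSpace ℝ (Fin N) × ℝ → EuclideanSpace ℝ (Fin N))
    (L_f : ℝ) (hLf : 0 ≤ L_f)
    (hlip : ∀ (u v : EuclideanSpace ℝ (Fin N)) (n : Fin Nt),
      ‖f (u, t n) - f (v, t n)‖ ≤ L_f * ‖u - v‖)
    (W : Matrix (Fin zb) (Fin Nt × Fin N) ℝ)
    (S : Set (SpaceTime N Nt))
    (x : SpaceTime N Nt) (hx : resid A_LM B_LM b Δt f t x = 0)
    (xt : SpaceTime N Nt) (hxtS : xt ∈ S)
    (hopt : ∀ w ∈ S, ‖mulVecE W (resid A_LM B_LM b Δt f t xt)‖ ≤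
      ‖mulVecE W (resid A_LM B_LM b Δt f t w)‖)
    (sA : ℝ) (hsA : 0 < sA)
    (hAlow : ∀ z : EuclideanSpace ℝ (Fin Nt × Fin N), sA * ‖z‖ ≤ ‖mulVecE A_LM z‖)
    (hdt : Δt * L_f * sigmaMax B_LM < sA)
    (P : ℝ) (hP : 0 < P)
    (hW : ∀ w ∈ S, P * ‖resid A_LM B_LM b Δt f t w‖ ≤
      ‖mulVecE W (resid A_LM B_LM b Δt f t w)‖) :
    ∀ w ∈ S, ‖vec x - vec xt‖ ≤
      (1 / P) * ((sigmaMax (W * A_LM) + Δt * L_f * sigmaMax (W * B_LM)) /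
        (sA - Δt * L_f * sigmaMax B_LM)) * ‖vec x - vec w‖ := by
  intro w hwS
  set c := sA - Δt * L_f * sigmaMax B_LM with hc
  have hcpos : 0 < c := by simp [hc]; linarith
  -- residual difference representation
  have hres : ∀ u v : SpaceTime N Nt,
      resid A_LM B_LM b Δt f t u - resid A_LM B_LM b Δt f t v =
      mulVecE A_LM (vec u - vec v) - Δt • mulVecE B_LM (Fbar f t u - Fbar f t v) := by
    intro u v
    simp only [resid, mulVecE_sub, smul_sub]
    abel
  -- lower bound: c * ‖vec u - vec v‖ ≤ ‖resid u - resid v‖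
  have hlow : ∀ u v : SpaceTime N Nt,
      c * ‖vec u - vec v‖ ≤ ‖resid A_LM B_LM b Δt f t u - resid A_LM B_LM b Δt f t v‖ := by
    intro u v
    rw [hres]
    have h1 := hAlow (vec u - vec v)
    have h2 : ‖Δt • mulVecE B_LM (Fbar f t u - Fbar f t v)‖ ≤
        Δt * L_f * sigmaMax B_LM * ‖vec u - vec v‖ := by
      rw [norm_smul, Real.norm_eq_abs, abs_of_pos hΔt]
      calc Δt * ‖mulVecE B_LM (Fbar f t u - Fbar f t v)‖
          ≤ Δt * (sigmaMax B_LM * ‖Fbar f t u - Fbar f t v‖) := by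
            exact mul_le_mul_of_nonneg_left (norm_mulVecE_le _ _) hΔt.le
        _ ≤ Δt * (sigmaMax B_LM * (L_f * ‖vec u - vec v‖)) := by
            refine mul_le_mul_of_nonneg_left (mul_le_mul_of_nonneg_left ?_
              (sigmaMax_nonneg _)) hΔt.le
            exact Fbar_lip f t L_f hLf hlip u v
        _ = Δt * L_f * sigmaMax B_LM * ‖vec u - vec v‖ := by ring
    calc c * ‖vec u - vec v‖
        = sA * ‖vec u - vec v‖ - Δt * L_f * sigmaMax B_LM * ‖vec u - vec v‖ := by
          rw [hc]; ring
      _ ≤ ‖mulVecE A_LM (vec u - vec v)‖ -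
            ‖Δt • mulVecE B_LM (Fbar f t u - Fbar f t v)‖ := by linarith
      _ ≤ ‖mulVecE A_LM (vec u - vec v) - Δt • mulVecE B_LM (Fbar f t u - Fbar f t v)‖ :=
          norm_sub_norm_le _ _
  -- upper bound on ‖W resid w‖
  have hup : ‖mulVecE W (resid A_LM B_LM b Δt f t w)‖ ≤
      (sigmaMax (W * A_LM) + Δt * L_f * sigmaMax (W * B_LM)) * ‖vec x - vec w‖ := by
    have hrw : mulVecE W (resid A_LM B_LM b Δt f t w) =
        mulVecE W (resid A_LM B_LM b Δt f t w - resid A_LM B_LM b Δt f t x) := by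
      rw [hx, sub_zero]
    rw [hrw, hres, mulVecE_sub]
    have e1 : mulVecE W (mulVecE A_LM (vec w - vec x)) = mulVecE (W * A_LM) (vec w - vec x) :=
      (mulVecE_mul _ _ _).symm
    have e2 : mulVecE W (Δt • mulVecE B_LM (Fbar f t w - Fbar f t x)) =
        Δt • mulVecE (W * B_LM) (Fbar f t w - Fbar f t x) := by
      rw [mulVecE_mul]
      simp [mulVecE]
    rw [e1, e2]
    have h1 : ‖mulVecE (W * A_LM) (vec w - vec x)‖ ≤ sigmaMax (W * A_LM) * ‖vec w - vec x‖ :=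
      norm_mulVecE_le _ _
    have h2 : ‖Δt • mulVecE (W * B_LM) (Fbar f t w - Fbar f t x)‖ ≤
        Δt * L_f * sigmaMax (W * B_LM) * ‖vec w - vec x‖ := by
      rw [norm_smul, Real.norm_eq_abs, abs_of_pos hΔt]
      calc Δt * ‖mulVecE (W * B_LM) (Fbar f t w - Fbar f t x)‖
          ≤ Δt * (sigmaMax (W * B_LM) * ‖Fbar f t w - Fbar f t x‖) :=
            mul_le_mul_of_nonneg_left (norm_mulVecE_le _ _) hΔt.le
        _ ≤ Δt * (sigmaMax (W * B_LM) * (L_f * ‖vec w - vec x‖)) := by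
            refine mul_le_mul_of_nonneg_left (mul_le_mul_of_nonneg_left ?_
              (sigmaMax_nonneg _)) hΔt.le
            exact Fbar_lip f t L_f hLf hlip w x
        _ = Δt * L_f * sigmaMax (W * B_LM) * ‖vec w - vec x‖ := by ring
    have hsw : ‖vec w - vec x‖ = ‖vec x - vec w‖ := norm_sub_rev _ _
    calc ‖mulVecE (W * A_LM) (vec w - vec x) - Δt • mulVecE (W * B_LM) (Fbar f t w - Fbar f t x)‖
        ≤ ‖mulVecE (W * A_LM) (vec w - vec x)‖ +
            ‖Δt • mulVecE (W * B_LM) (Fbar f t w - Fbar f t x)‖ := norm_sub_le _ _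
      _ ≤ sigmaMax (W * A_LM) * ‖vec w - vec x‖ +
            Δt * L_f * sigmaMax (W * B_LM) * ‖vec w - vec x‖ := by linarith
      _ = (sigmaMax (W * A_LM) + Δt * L_f * sigmaMax (W * B_LM)) * ‖vec x - vec w‖ := by
          rw [hsw]; ring
  -- chain
  have hchain : c * ‖vec x - vec xt‖ ≤
      (1 / P) * ((sigmaMax (W * A_LM) + Δt * L_f * sigmaMax (W * B_LM)) * ‖vec x - vec w‖) := by
    have step1 : c * ‖vec x - vec xt‖ ≤ ‖resid A_LM B_LM b Δt f t xt‖ := by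
      have := hlow x xt
      rwa [hx, zero_sub, norm_neg] at this
    have step2 : P * ‖resid A_LM B_LM b Δt f t xt‖ ≤
        ‖mulVecE W (resid A_LM B_LM b Δt f t xt)‖ := hW xt hxtS
    have step3 := hopt w hwS
    have : P * (c * ‖vec x - vec xt‖) ≤
        (sigmaMax (W * A_LM) + Δt * L_f * sigmaMax (W * B_LM)) * ‖vec x - vec w‖ := by
      calc P * (c * ‖vec x - vec xt‖) ≤ P * ‖resid A_LM B_LM b Δt f t xt‖ :=
            mul_le_mul_of_nonneg_left step1 hP.le
        _ ≤ ‖mulVecE W (resid A_LM B_LM b Δt f t xt)‖ := step2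
        _ ≤ ‖mulVecE W (resid A_LM B_LM b Δt f t w)‖ := step3
        _ ≤ _ := hup
    rw [one_div, ← div_eq_inv_mul, le_div_iff₀ hP]
    linarith [this]
  calc ‖vec x - vec xt‖ = (1 / c) * (c * ‖vec x - vec xt‖) := by
        field_simp
    _ ≤ (1 / c) * ((1 / P) * ((sigmaMax (W * A_LM) + Δt * L_f * sigmaMax (W * B_LM)) *
          ‖vec x - vec w‖)) := by
        exact mul_le_mul_of_nonneg_left hchain (by positivity)
    _ = (1 / P) * ((sigmaMax (W * A_LM) + Δt * L_f * sigmaMax (W * B_LM)) / c) *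
          ‖vec x - vec w‖ := by
        ring
end
end

section
/- (Corollary 5.6, second part: the ST-LSPG solution minimizes the a posteriori error bound.) Let x be a space-time function with r̄(x) = 0, and let x̃ ∈ S satisfy ‖W̄ r̄(x̃)‖₂ ≤ ‖W̄ r̄(w)‖₂ for all w ∈ S. Assume: (i) there exists s_A > 0 with ‖A_LM z‖₂ ≥ s_A ‖z‖₂ for all z ∈ ℝ^{N·N_t}; (ii) Δt · L_f · σ_max(B_LM) < s_A, and set K_r := s_A − Δt·L_f·σ_max(B_LM); and (iii) there exists P > 0 with ‖W̄ r̄(w)‖₂ ≥ P · ‖r̄(w)‖₂ for all w ∈ S. Then for every w ∈ S, max_{n ∈ Fin N_t} ‖x(n) − x̃(n)‖₂ ≤ ‖vec(x) − vec(x̃)‖₂ ≤ (1/(P · K_r)) · ‖W̄ r̄(w)‖₂. -/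
noncomputable section

lemma norm_vec_sub_sq {N Nt : ℕ} (u v : SpaceTime N Nt) :
    ‖vec u - vec v‖ ^ 2 = ∑ n, ‖u n - v n‖ ^ 2 := by
  rw [EuclideanSpace.norm_eq, Real.sq_sqrt (by positivity)]
  rw [Fintype.sum_prod_type]
  apply Finset.sum_congr rfl
  intro n _
  rw [EuclideanSpace.norm_eq, Real.sq_sqrt (by positivity)]
  apply Finset.sum_congr rfl
  intro j _
  rfl

/-- Corollary 5.6, second part: the ST-LSPG solution minimizes
the a posteriori residual-based error bound. -/
theorem aposteriori_bound_minimized {N Nt zb : ℕ} (hN : 1 ≤ N) (hNt : 1 ≤ Nt)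
    (t : Fin Nt → ℝ) (Δt : ℝ) (hΔt : 0 < Δt)
    (A_LM B_LM : Matrix (Fin Nt × Fin N) (Fin Nt × Fin N) ℝ)
    (b : EuclideanSpace ℝ (Fin Nt × Fin N))
    (f : EuclideanSpace ℝ (Fin N) × ℝ → EuclideanSpace ℝ (Fin N))
    (L_f : ℝ) (hLf : 0 ≤ L_f)
    (hlip : ∀ (u v : EuclideanSpace ℝ (Fin N)) (n : Fin Nt),
      ‖f (u, t n) - f (v, t n)‖ ≤ L_f * ‖u - v‖)
    (W : Matrix (Fin zb) (Fin Nt × Fin N) ℝ)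
    (S : Set (SpaceTime N Nt))
    (x : SpaceTime N Nt) (hx : resid A_LM B_LM b Δt f t x = 0)
    (xt : SpaceTime N Nt) (hxtS : xt ∈ S)
    (hopt : ∀ w ∈ S, ‖mulVecE W (resid A_LM B_LM b Δt f t xt)‖ ≤
      ‖mulVecE W (resid A_LM B_LM b Δt f t w)‖)
    (sA : ℝ) (hsA : 0 < sA)
    (hAlow : ∀ z : EuclideanSpace ℝ (Fin Nt × Fin N), sA * ‖z‖ ≤ ‖mulVecE A_LM z‖)
    (hdt : Δt * L_f * sigmaMax B_LM < sA)
    (P : ℝ) (hP : 0 < P)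
    (hW : ∀ w ∈ S, P * ‖resid A_LM B_LM b Δt f t w‖ ≤
      ‖mulVecE W (resid A_LM B_LM b Δt f t w)‖) :
    ∀ w ∈ S, (⨆ n : Fin Nt, ‖x n - xt n‖) ≤ ‖vec x - vec xt‖ ∧
      ‖vec x - vec xt‖ ≤ (1 / (P * (sA - Δt * L_f * sigmaMax B_LM))) *
        ‖mulVecE W (resid A_LM B_LM b Δt f t w)‖ := by
  intro w hw
  have hNE : Nonempty (Fin Nt) := ⟨⟨0, hNt⟩⟩
  set e := ‖vec x - vec xt‖ with he
  have he0 : 0 ≤ e := norm_nonneg _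
  constructor
  · apply ciSup_le
    intro n
    have h1 : ‖x n - xt n‖ ^ 2 ≤ e ^ 2 := by
      rw [he, norm_vec_sub_sq]
      exact Finset.single_le_sum (f := fun m => ‖x m - xt m‖ ^ 2)
        (fun m _ => by positivity) (Finset.mem_univ n)
    exact (pow_le_pow_iff_left₀ (norm_nonneg _) he0 two_ne_zero).mp h1
  · have hF : ‖Fbar f t x - Fbar f t xt‖ ≤ L_f * e := by
      have hsq : ‖Fbar f t x - Fbar f t xt‖ ^ 2 ≤ (L_f * e) ^ 2 := by
        have heq : Fbar f t x - Fbar f t xt =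
            vec (fun n => f (x n, t n)) - vec (fun n => f (xt n, t n)) := rfl
        rw [heq, norm_vec_sub_sq, mul_pow, he, norm_vec_sub_sq, Finset.mul_sum]
        apply Finset.sum_le_sum
        intro n _
        calc ‖f (x n, t n) - f (xt n, t n)‖ ^ 2
            ≤ (L_f * ‖x n - xt n‖) ^ 2 :=
              pow_le_pow_left₀ (norm_nonneg _) (hlip (x n) (xt n) n) 2
          _ = L_f ^ 2 * ‖x n - xt n‖ ^ 2 := by ring
      exact (pow_le_pow_iff_left₀ (norm_nonneg _) (by positivity) two_ne_zero).mp hsq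
    set rx := resid A_LM B_LM b Δt f t xt with hrx
    have hid : mulVecE A_LM (vec x - vec xt) =
        Δt • mulVecE B_LM (Fbar f t x - Fbar f t xt) - rx := by
      have h0 : mulVecE A_LM (vec x) - Δt • mulVecE B_LM (Fbar f t x) + b = 0 := hx
      rw [sub_add_eq_add_sub, sub_eq_zero] at h0
      have h1 : mulVecE A_LM (vec x) = Δt • mulVecE B_LM (Fbar f t x) - b :=
        eq_sub_of_add_eq h0
      rw [mulVecE_sub, mulVecE_sub, smul_sub, hrx, h1]
      unfold resid
      abel
    have hsig : (0:ℝ) ≤ sigmaMax B_LM := norm_nonneg _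
    have h2 : sA * e ≤ Δt * L_f * sigmaMax B_LM * e + ‖rx‖ := by
      calc sA * e ≤ ‖mulVecE A_LM (vec x - vec xt)‖ := hAlow _
        _ = ‖Δt • mulVecE B_LM (Fbar f t x - Fbar f t xt) - rx‖ := by rw [hid]
        _ ≤ ‖Δt • mulVecE B_LM (Fbar f t x - Fbar f t xt)‖ + ‖rx‖ := norm_sub_le _ _
        _ = Δt * ‖mulVecE B_LM (Fbar f t x - Fbar f t xt)‖ + ‖rx‖ := by
            rw [norm_smul, Real.norm_eq_abs, abs_of_pos hΔt]
        _ ≤ Δt * (sigmaMax B_LM * ‖Fbar f t x - Fbar f t xt‖) + ‖rx‖ := by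
            gcongr
            exact norm_mulVecE_le _ _
        _ ≤ Δt * (sigmaMax B_LM * (L_f * e)) + ‖rx‖ := by gcongr
        _ = Δt * L_f * sigmaMax B_LM * e + ‖rx‖ := by ring
    have hK : (0:ℝ) < sA - Δt * L_f * sigmaMax B_LM := by linarith
    have hPK : (0:ℝ) < P * (sA - Δt * L_f * sigmaMax B_LM) := mul_pos hP hK
    have h3 : P * ‖rx‖ ≤ ‖mulVecE W rx‖ := hW xt hxtS
    have h4 : ‖mulVecE W rx‖ ≤ ‖mulVecE W (resid A_LM B_LM b Δt f t w)‖ := hopt w hw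
    rw [one_div, inv_mul_eq_div, le_div_iff₀ hPK]
    nlinarith [norm_nonneg rx]
end
end
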